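/- arXiv:math/0510637 — 7 statements merged into one kernel-verified Lean document; each statement's English description precedes it below -/
import Mathlib

section
/- Let β = [[−a, l, 0], [m, A, −𝕁ᵗl], [0, −ᵗm𝕁, a]] be an element of 𝔰𝔬(2,n+1) in the displayed block form, and assume β² = −Id_{n+3}. Then the column vector m is nonzero and lightlike for the Minkowski form, i.e. m ≠ 0 and ᵗm𝕁m = 0; and likewise l ≠ 0 and l𝕁ᵗl = 0, i.e. the vector 𝕁ᵗl is nonzero and lightlike. -/
open Matrix

/- Setup: the Lie algebra 𝔰𝔬(2,n+1) in block form.  The index type of the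
(n+3)×(n+3) matrices is `Fin 1 ⊕ (Fin (n+1) ⊕ Fin 1)`, corresponding to the
decomposition ℝ^{n+3} = ℝ ⊕ ℝ^{n+1} ⊕ ℝ. -/

/-- The index type for (n+3)×(n+3) block matrices. -/
abbrev Idx (n : ℕ) := Fin 1 ⊕ (Fin (n + 1) ⊕ Fin 1)

/-- The Minkowski Gram matrix 𝕁 = diag(−1, 1, …, 1) of signature (1,n) on ℝ^{n+1}. -/
def MinkJ (n : ℕ) : Matrix (Fin (n + 1)) (Fin (n + 1)) ℝ :=
  Matrix.diagonal fun i => if i = 0 then (-1 : ℝ) else 1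

/-- The block matrix β = [[−a, l, 0], [m, A, −𝕁ᵗl], [0, −ᵗm𝕁, a]]. -/
def betaMat (n : ℕ) (a : ℝ) (m l : Fin (n + 1) → ℝ)
    (A : Matrix (Fin (n + 1)) (Fin (n + 1)) ℝ) : Matrix (Idx n) (Idx n) ℝ :=
  Matrix.of fun i j =>
    match i, j with
    | Sum.inl _, Sum.inl _ => -a
    | Sum.inl _, Sum.inr (Sum.inl k) => l k
    | Sum.inl _, Sum.inr (Sum.inr _) => 0
    | Sum.inr (Sum.inl k), Sum.inl _ => m k
    | Sum.inr (Sum.inl k), Sum.inr (Sum.inl k') => A k k'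
    | Sum.inr (Sum.inl k), Sum.inr (Sum.inr _) => -((MinkJ n).mulVec l k)
    | Sum.inr (Sum.inr _), Sum.inl _ => 0
    | Sum.inr (Sum.inr _), Sum.inr (Sum.inl k) => -(Matrix.vecMul m (MinkJ n) k)
    | Sum.inr (Sum.inr _), Sum.inr (Sum.inr _) => a

/-!
The three corner entries of β² are a² + l·m, −l𝕁ᵗl and −ᵗm𝕁m. Comparing them with
those of −Id gives l𝕁ᵗl = ᵗm𝕁m = 0 and l·m = −1 − a² ≠ 0, so neither l nor m vanishes.
-/

section BetaSquared

variable {n : ℕ} (a : ℝ) (m l : Fin (n + 1) → ℝ) (A : Matrix (Fin (n + 1)) (Fin (n + 1)) ℝ)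

lemma betaMat_mul_self_inl_inl (i j : Fin 1) :
    (betaMat n a m l A * betaMat n a m l A) (Sum.inl i) (Sum.inl j) = a ^ 2 + l ⬝ᵥ m := by
  simp [mul_apply, betaMat, Fintype.sum_sum_type, dotProduct, sq]

lemma betaMat_mul_self_inl_inr_inr (i j : Fin 1) :
    (betaMat n a m l A * betaMat n a m l A) (Sum.inl i) (Sum.inr (Sum.inr j)) =
      -(l ⬝ᵥ (MinkJ n).mulVec l) := by
  simp [mul_apply, betaMat, Fintype.sum_sum_type, dotProduct, mul_comm]

lemma betaMat_mul_self_inr_inr_inl (i j : Fin 1) :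
    (betaMat n a m l A * betaMat n a m l A) (Sum.inr (Sum.inr i)) (Sum.inl j) =
      -(m ⬝ᵥ (MinkJ n).mulVec m) := by
  rw [dotProduct_mulVec]
  simp [mul_apply, betaMat, Fintype.sum_sum_type, dotProduct]

end BetaSquared

lemma ne_zero_and_ne_zero_of_sq_add_dotProduct_eq_neg_one {ι : Type*} [Fintype ι]
    {a : ℝ} {l m : ι → ℝ} (h : a ^ 2 + l ⬝ᵥ m = -1) : m ≠ 0 ∧ l ≠ 0 := by
  have hlm : l ⬝ᵥ m ≠ 0 := by nlinarith [sq_nonneg a]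
  exact ⟨fun hm => hlm (by simp [hm]), fun hl => hlm (by simp [hl])⟩

theorem stmt0_general (n : ℕ) (a : ℝ) (m l : Fin (n + 1) → ℝ)
    (A : Matrix (Fin (n + 1)) (Fin (n + 1)) ℝ)
    (hβ : betaMat n a m l A * betaMat n a m l A = -1) :
    m ≠ 0 ∧ m ⬝ᵥ (MinkJ n).mulVec m = 0 ∧
      l ≠ 0 ∧ l ⬝ᵥ (MinkJ n).mulVec l = 0 := by
  have hml : a ^ 2 + l ⬝ᵥ m = -1 := by
    simpa [betaMat_mul_self_inl_inl] using congr_fun₂ hβ (Sum.inl 0) (Sum.inl 0)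
  have hll : l ⬝ᵥ (MinkJ n).mulVec l = 0 := by
    simpa [betaMat_mul_self_inl_inr_inr] using
      congr_fun₂ hβ (Sum.inl 0) (Sum.inr (Sum.inr 0))
  have hmm : m ⬝ᵥ (MinkJ n).mulVec m = 0 := by
    simpa [betaMat_mul_self_inr_inr_inl] using
      congr_fun₂ hβ (Sum.inr (Sum.inr 0)) (Sum.inl 0)
  obtain ⟨hm, hl⟩ := ne_zero_and_ne_zero_of_sq_add_dotProduct_eq_neg_one hml
  exact ⟨hm, hmm, hl, hll⟩

/-- If β ∈ 𝔰𝔬(2,n+1) in the displayed block form satisfies β² = −Id,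
then m is nonzero and lightlike (ᵗm𝕁m = 0), and likewise l is nonzero and lightlike
(l𝕁ᵗl = 0, i.e. the vector 𝕁ᵗl is nonzero and lightlike). -/
theorem stmt0 (n : ℕ) (hn : 1 ≤ n) (a : ℝ) (m l : Fin (n + 1) → ℝ)
    (A : Matrix (Fin (n + 1)) (Fin (n + 1)) ℝ)
    (hA : Aᵀ * MinkJ n + MinkJ n * A = 0)
    (hβ : betaMat n a m l A * betaMat n a m l A = -1) :
    m ≠ 0 ∧ m ⬝ᵥ (MinkJ n).mulVec m = 0 ∧
      l ≠ 0 ∧ l ⬝ᵥ (MinkJ n).mulVec l = 0 :=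
  stmt0_general n a m l A hβ
end

section
/- Let β = [[−a, l, 0], [m, A, −𝕁ᵗl], [0, −ᵗm𝕁, a]] be an element of 𝔰𝔬(2,n+1) in the displayed block form, and assume β² = −Id_{n+3}. Then for every w ∈ ℝ^{n+1} with l·w = 0 and ᵗm𝕁w = 0 (i.e. w in the 𝕁-orthogonal complement W of span{m, 𝕁ᵗl}), one has A(A·w) = −w; that is, the restriction of A to W is a complex structure. -/
open Matrix

theorem mulVec_mulVec_eq_neg_of_mul_self_eq {ι R : Type*} [Fintype ι] [DecidableEq ι]
    [CommRing R] {A : Matrix ι ι R} {m l u v : ι → R}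
    (hA : A * A = -1 - vecMulVec m l - vecMulVec u v) {w : ι → R}
    (hl : l ⬝ᵥ w = 0) (hv : v ⬝ᵥ w = 0) : A *ᵥ (A *ᵥ w) = -w := by
  simp [mulVec_mulVec, hA, sub_mulVec, neg_mulVec, vecMulVec_mulVec, hl, hv]

theorem betaMat_mul_self_submatrix (n : ℕ) (a : ℝ) (m l : Fin (n + 1) → ℝ)
    (A : Matrix (Fin (n + 1)) (Fin (n + 1)) ℝ) :
    (betaMat n a m l A * betaMat n a m l A).submatrix (Sum.inr ∘ Sum.inl) (Sum.inr ∘ Sum.inl) =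
      vecMulVec m l + A * A + vecMulVec (MinkJ n *ᵥ l) (m ᵥ* MinkJ n) := by
  ext k k'
  simp only [betaMat, submatrix_apply, Function.comp_apply, mul_apply, of_apply,
    Fintype.sum_sum_type, Finset.univ_unique, Finset.sum_const, Finset.card_singleton, one_smul,
    mul_neg, neg_mul, neg_neg, Matrix.add_apply, vecMulVec_apply]
  ring

theorem mul_self_eq_of_betaMat_mul_self_eq_neg_one {n : ℕ} {a : ℝ} {m l : Fin (n + 1) → ℝ}
    {A : Matrix (Fin (n + 1)) (Fin (n + 1)) ℝ} (hβ : betaMat n a m l A * betaMat n a m l A = -1) :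
    A * A = -1 - vecMulVec m l - vecMulVec (MinkJ n *ᵥ l) (m ᵥ* MinkJ n) := by
  have h := betaMat_mul_self_submatrix n a m l A
  rw [hβ, submatrix_neg, Pi.neg_apply, Pi.neg_apply,
    submatrix_one _ (Sum.inr_injective.comp Sum.inl_injective)] at h
  rw [h]
  abel

theorem stmt2_general (n : ℕ) (a : ℝ) (m l : Fin (n + 1) → ℝ)
    (A : Matrix (Fin (n + 1)) (Fin (n + 1)) ℝ)
    (hβ : betaMat n a m l A * betaMat n a m l A = -1) :
    ∀ w : Fin (n + 1) → ℝ, l ⬝ᵥ w = 0 → m ⬝ᵥ (MinkJ n).mulVec w = 0 →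
      A.mulVec (A.mulVec w) = -w := by
  intro w hl hm
  rw [dotProduct_mulVec] at hm
  exact mulVec_mulVec_eq_neg_of_mul_self_eq (mul_self_eq_of_betaMat_mul_self_eq_neg_one hβ) hl hm

/-- If β ∈ 𝔰𝔬(2,n+1) in the displayed block form satisfies β² = −Id,
then for every w ∈ ℝ^{n+1} with l·w = 0 and ᵗm𝕁w = 0 (i.e. w in the 𝕁-orthogonal
complement of span{m, 𝕁ᵗl}) one has A(A·w) = −w; the restriction of A to that
complement is a complex structure. -/
theorem stmt2 (n : ℕ) (hn : 1 ≤ n) (a : ℝ) (m l : Fin (n + 1) → ℝ)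
    (A : Matrix (Fin (n + 1)) (Fin (n + 1)) ℝ)
    (hA : Aᵀ * MinkJ n + MinkJ n * A = 0)
    (hβ : betaMat n a m l A * betaMat n a m l A = -1) :
    ∀ w : Fin (n + 1) → ℝ, l ⬝ᵥ w = 0 → m ⬝ᵥ (MinkJ n).mulVec w = 0 →
      A.mulVec (A.mulVec w) = -w :=
  stmt2_general n a m l A hβ
end

section
/- Let β = [[−a, l, 0], [m, A, −𝕁ᵗl], [0, −ᵗm𝕁, a]] be an element of 𝔰𝔬(2,n+1) in the displayed block form, and assume β² = −Id_{n+3}. Let W := {w ∈ ℝ^{n+1} : l·w = 0 and ᵗm𝕁w = 0} be the 𝕁-orthogonal complement of span{m, 𝕁ᵗl}. Then the Minkowski form w ↦ ᵗw𝕁w is positive definite on W, the matrix A maps W into W and its restriction A|_W is an orthogonal complex structure on W (i.e. (A|_W)² = −id and ᵗ(Aw)𝕁(Aw') = ᵗw𝕁w' for w, w' ∈ W); consequently dim W = n−1 is even, so n is odd. -/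
open Matrix

/-- If β ∈ 𝔰𝔬(2,n+1) in the displayed block form satisfies β² = −Id,
and W := {w : l·w = 0 and ᵗm𝕁w = 0} is the 𝕁-orthogonal complement of span{m, 𝕁ᵗl},
then the Minkowski form is positive definite on W, the matrix A maps W into W and
its restriction to W is an orthogonal complex structure; consequently
dim W = n − 1 is even, so n is odd. -/
theorem stmt4 (n : ℕ) (hn : 1 ≤ n) (a : ℝ) (m l : Fin (n + 1) → ℝ)
    (A : Matrix (Fin (n + 1)) (Fin (n + 1)) ℝ)
    (hA : Aᵀ * MinkJ n + MinkJ n * A = 0)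
    (hβ : betaMat n a m l A * betaMat n a m l A = -1)
    (W : Submodule ℝ (Fin (n + 1) → ℝ))
    (hW : ∀ w, w ∈ W ↔ l ⬝ᵥ w = 0 ∧ m ⬝ᵥ (MinkJ n).mulVec w = 0) :
    (∀ w ∈ W, w ≠ 0 → 0 < w ⬝ᵥ (MinkJ n).mulVec w) ∧
    (∀ w ∈ W, A.mulVec w ∈ W) ∧
    (∀ w ∈ W, A.mulVec (A.mulVec w) = -w) ∧
    (∀ w ∈ W, ∀ w' ∈ W,
      A.mulVec w ⬝ᵥ (MinkJ n).mulVec (A.mulVec w') = w ⬝ᵥ (MinkJ n).mulVec w') ∧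
    Module.finrank ℝ W = n - 1 ∧ Even (n - 1) ∧ Odd n := by
  classical
  -- entry equations from β² = -1
  have h11 := congrFun (congrFun hβ (Sum.inl 0)) (Sum.inl 0)
  simp [Matrix.mul_apply, betaMat, Fintype.sum_sum_type, Matrix.neg_apply, Matrix.one_apply] at h11
  have h1A := fun k => congrFun (congrFun hβ (Sum.inl 0)) (Sum.inr (Sum.inl k))
  simp [Matrix.mul_apply, betaMat, Fintype.sum_sum_type, Matrix.neg_apply, Matrix.one_apply] at h1A
  have h13 := congrFun (congrFun hβ (Sum.inl 0)) (Sum.inr (Sum.inr 0))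
  simp [Matrix.mul_apply, betaMat, Fintype.sum_sum_type, Matrix.neg_apply, Matrix.one_apply] at h13
  have h31 := congrFun (congrFun hβ (Sum.inr (Sum.inr 0))) (Sum.inl 0)
  simp [Matrix.mul_apply, betaMat, Fintype.sum_sum_type, Matrix.neg_apply, Matrix.one_apply] at h31
  have h3A := fun k => congrFun (congrFun hβ (Sum.inr (Sum.inr 0))) (Sum.inr (Sum.inl k))
  simp [Matrix.mul_apply, betaMat, Fintype.sum_sum_type, Matrix.neg_apply, Matrix.one_apply] at h3A
  have hAA := fun k k' => congrFun (congrFun hβ (Sum.inr (Sum.inl k))) (Sum.inr (Sum.inl k'))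
  simp [Matrix.mul_apply, betaMat, Fintype.sum_sum_type, Matrix.neg_apply, Matrix.one_apply] at hAA
  -- reformulations
  have hlm : l ⬝ᵥ m = -1 - a * a := by
    simp only [dotProduct]; linarith [h11]
  have hlA : ∀ k, (l ᵥ* A) k = a * l k := by
    intro k; simp only [Matrix.vecMul, dotProduct]; linarith [h1A k]
  have hmJA : ∀ k, ((m ᵥ* MinkJ n) ᵥ* A) k = -a * (m ᵥ* MinkJ n) k := by
    intro k; have h := h3A k
    simp only [Matrix.vecMul, dotProduct] at h ⊢; linarith
  have hlJl : l ⬝ᵥ (MinkJ n *ᵥ l) = 0 := by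
    simp only [dotProduct]; linarith [h13]
  have hmJm : (m ᵥ* MinkJ n) ⬝ᵥ m = 0 := by
    simp only [dotProduct]; linarith [h31]
  have hA2 : A * A = -1 - vecMulVec m l - vecMulVec (MinkJ n *ᵥ l) (m ᵥ* MinkJ n) := by
    ext k k'
    have h := hAA k k'
    simp only [Matrix.sub_apply, Matrix.neg_apply, Matrix.one_apply, Matrix.vecMulVec_apply,
      Matrix.mul_apply]
    by_cases hkk : k = k' <;> simp [hkk] at h ⊢ <;> linarith
  have hvmv : ∀ x y w : Fin (n + 1) → ℝ, vecMulVec x y *ᵥ w = (y ⬝ᵥ w) • x := by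
    intro x y w; funext k
    simp only [Matrix.mulVec, dotProduct, Matrix.vecMulVec_apply, Pi.smul_apply, smul_eq_mul,
      Finset.sum_mul]
    exact Finset.sum_congr rfl fun i _ => by ring
  -- dot product helpers
  have hlAw : ∀ w, l ⬝ᵥ (A *ᵥ w) = a * (l ⬝ᵥ w) := by
    intro w
    rw [Matrix.dotProduct_mulVec, dotProduct, dotProduct, Finset.mul_sum]
    exact Finset.sum_congr rfl fun k _ => by rw [hlA k]; ring
  have hmJAw : ∀ w, (m ᵥ* MinkJ n) ⬝ᵥ (A *ᵥ w) = -a * ((m ᵥ* MinkJ n) ⬝ᵥ w) := by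
    intro w
    rw [Matrix.dotProduct_mulVec, dotProduct, dotProduct, Finset.mul_sum]
    exact Finset.sum_congr rfl fun k _ => by rw [hmJA k]; ring
  have hmem : ∀ w, w ∈ W → l ⬝ᵥ w = 0 ∧ (m ᵥ* MinkJ n) ⬝ᵥ w = 0 := by
    intro w hw
    obtain ⟨h1, h2⟩ := (hW w).1 hw
    exact ⟨h1, by rwa [Matrix.dotProduct_mulVec] at h2⟩
  -- A maps W to W
  have hmap : ∀ w ∈ W, A *ᵥ w ∈ W := by
    intro w hw
    obtain ⟨h1, h2⟩ := hmem w hw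
    rw [hW]
    refine ⟨by rw [hlAw, h1, mul_zero], ?_⟩
    rw [Matrix.dotProduct_mulVec, hmJAw, h2, mul_zero]
  -- A² = -1 on W
  have hA2W : ∀ w ∈ W, A *ᵥ (A *ᵥ w) = -w := by
    intro w hw
    obtain ⟨h1, h2⟩ := hmem w hw
    rw [Matrix.mulVec_mulVec, hA2, Matrix.sub_mulVec, Matrix.sub_mulVec, Matrix.neg_mulVec,
      Matrix.one_mulVec, hvmv, hvmv, h1, h2, zero_smul, zero_smul, sub_zero, sub_zero]
  -- orthogonality
  have horth : ∀ w ∈ W, ∀ w' ∈ W,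
      A *ᵥ w ⬝ᵥ (MinkJ n *ᵥ (A *ᵥ w')) = w ⬝ᵥ (MinkJ n *ᵥ w') := by
    intro w hw w' hw'
    have hAJ : Aᵀ * MinkJ n = -(MinkJ n * A) := eq_neg_of_add_eq_zero_left hA
    have h1 : A *ᵥ w ⬝ᵥ (MinkJ n *ᵥ (A *ᵥ w')) = w ⬝ᵥ (Aᵀ *ᵥ (MinkJ n *ᵥ (A *ᵥ w'))) := by
      rw [dotProduct_comm, Matrix.dotProduct_mulVec, ← Matrix.mulVec_transpose]
      exact dotProduct_comm _ _
    rw [h1, Matrix.mulVec_mulVec, hAJ, Matrix.neg_mulVec, ← Matrix.mulVec_mulVec,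
      Matrix.mulVec_mulVec, ← Matrix.mulVec_mulVec, hA2W w' hw', Matrix.mulVec_neg]
    simp
  -- Minkowski form in coordinates
  have hform : ∀ v w : Fin (n + 1) → ℝ,
      v ⬝ᵥ (MinkJ n *ᵥ w) = v ⬝ᵥ w - 2 * (v 0 * w 0) := by
    intro v w
    have key : ∀ i : Fin (n + 1),
        v i * ((MinkJ n) *ᵥ w) i = v i * w i - (if i = 0 then 2 * (v i * w i) else 0) := by
      intro i
      rw [MinkJ, Matrix.mulVec_diagonal]
      split <;> ring
    rw [dotProduct, Finset.sum_congr rfl fun i _ => key i, Finset.sum_sub_distrib,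
      Finset.sum_ite_eq' Finset.univ (0 : Fin (n + 1)) (fun i => 2 * (v i * w i))]
    simp [dotProduct]
  have hmJw : ∀ w : Fin (n + 1) → ℝ, (m ᵥ* MinkJ n) ⬝ᵥ w = m ⬝ᵥ w - 2 * (m 0 * w 0) := by
    intro w; rw [← Matrix.dotProduct_mulVec]; exact hform m w
  have hc : (-1 - a * a : ℝ) ≠ 0 := by nlinarith [sq_nonneg a]
  have hmm : m ⬝ᵥ m = 2 * (m 0 * m 0) := by
    have := hmJw m; rw [hmJm] at this; linarith
  have hm0 : m 0 ≠ 0 := by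
    intro h0
    have : m ⬝ᵥ m = 0 := by rw [hmm, h0]; ring
    have hmz : m = 0 := dotProduct_self_eq_zero.mp this
    rw [hmz] at hlm; simp at hlm; exact hc (by linarith)
  -- positivity on W
  have hpos : ∀ w ∈ W, w ≠ 0 → 0 < w ⬝ᵥ (MinkJ n *ᵥ w) := by
    intro w hw hwne
    obtain ⟨h1, h2⟩ := hmem w hw
    by_contra hle
    push_neg at hle
    have hQ : w ⬝ᵥ w - 2 * (w 0 * w 0) ≤ 0 := by rw [← hform]; exact hle
    have hmw : m ⬝ᵥ w = 2 * (m 0 * w 0) := by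
      have := hmJw w; rw [h2] at this; linarith
    have hz : (m 0 • w - w 0 • m) ⬝ᵥ (m 0 • w - w 0 • m) = 0 := by
      have expand : (m 0 • w - w 0 • m) ⬝ᵥ (m 0 • w - w 0 • m)
          = m 0 * m 0 * (w ⬝ᵥ w) - 2 * (m 0 * w 0) * (m ⬝ᵥ w) + w 0 * w 0 * (m ⬝ᵥ m) := by
        simp only [sub_dotProduct, dotProduct_sub, smul_dotProduct,
          dotProduct_smul, smul_eq_mul, dotProduct_comm m w]
        ring
      have hnn : 0 ≤ (m 0 • w - w 0 • m) ⬝ᵥ (m 0 • w - w 0 • m) := by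
        rw [dotProduct]
        exact Finset.sum_nonneg fun i _ => mul_self_nonneg _
      have hval : (m 0 • w - w 0 • m) ⬝ᵥ (m 0 • w - w 0 • m) ≤ 0 := by
        rw [expand, hmw, hmm]
        nlinarith [hQ, mul_self_nonneg (m 0)]
      linarith
    have hzv : m 0 • w - w 0 • m = 0 := dotProduct_self_eq_zero.mp hz
    have hw0 : w 0 = 0 := by
      have hlzv := congrArg (fun v => l ⬝ᵥ v) hzv
      simp only [dotProduct_sub, dotProduct_smul, smul_eq_mul,
        dotProduct_zero, h1, hlm, mul_zero, zero_sub, neg_eq_zero] at hlzv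
      rcases mul_eq_zero.mp hlzv with h'' | h''
      · exact h''
      · exact absurd h'' hc
    apply hwne
    funext i
    have h5 := congrFun hzv i
    simp only [Pi.sub_apply, Pi.smul_apply, smul_eq_mul, Pi.zero_apply, hw0, zero_mul,
      sub_zero] at h5
    rcases mul_eq_zero.mp h5 with h | h
    · exact absurd h hm0
    · simp [h]
  -- rank computation
  have hJJ : MinkJ n * MinkJ n = 1 := by
    rw [MinkJ, Matrix.diagonal_mul_diagonal]
    have : (fun i : Fin (n + 1) => (if i = 0 then (-1 : ℝ) else 1) * (if i = 0 then (-1 : ℝ) else 1))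
        = fun _ => (1 : ℝ) := by
      funext i; split <;> norm_num
    rw [this, Matrix.diagonal_one]
  have hmJJl : (m ᵥ* MinkJ n) ⬝ᵥ (MinkJ n *ᵥ l) = -1 - a * a := by
    rw [← Matrix.dotProduct_mulVec, Matrix.mulVec_mulVec, hJJ, Matrix.one_mulVec,
      dotProduct_comm, hlm]
  let f : (Fin (n + 1) → ℝ) →ₗ[ℝ] ℝ × ℝ :=
    { toFun := fun w => (l ⬝ᵥ w, (m ᵥ* MinkJ n) ⬝ᵥ w)
      map_add' := fun x y => by simp [dotProduct_add]
      map_smul' := fun c x => by simp [dotProduct_smul] }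
  have hker : W = LinearMap.ker f := by
    ext w
    rw [hW, LinearMap.mem_ker]
    constructor
    · rintro ⟨hw1, hw2⟩
      have h2' : (m ᵥ* MinkJ n) ⬝ᵥ w = 0 := by rwa [Matrix.dotProduct_mulVec] at hw2
      simp [f, hw1, h2']
    · intro h
      have h1 : l ⬝ᵥ w = 0 := congrArg Prod.fst h
      have h2 : (m ᵥ* MinkJ n) ⬝ᵥ w = 0 := congrArg Prod.snd h
      exact ⟨h1, by rwa [Matrix.dotProduct_mulVec]⟩
  have hsurj : Function.Surjective f := by
    rintro ⟨x, y⟩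
    refine ⟨(x / (-1 - a * a)) • m + (y / (-1 - a * a)) • (MinkJ n *ᵥ l), ?_⟩
    have hmJm' : (m ᵥ* MinkJ n) ⬝ᵥ m = 0 := hmJm
    have hlJl' : l ⬝ᵥ (MinkJ n *ᵥ l) = 0 := hlJl
    simp only [f, LinearMap.coe_mk, AddHom.coe_mk, dotProduct_add,
      dotProduct_smul, smul_eq_mul, hlm, hmJm', hlJl', hmJJl, Prod.mk.injEq]
    constructor <;> field_simp [show (-1 - a ^ 2 : ℝ) ≠ 0 by nlinarith [sq_nonneg a]] <;> ring
  have hrank : Module.finrank ℝ W = n - 1 := by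
    have hrn := LinearMap.finrank_range_add_finrank_ker f
    rw [LinearMap.range_eq_top.mpr hsurj] at hrn
    have h2 : Module.finrank ℝ (⊤ : Submodule ℝ (ℝ × ℝ)) = 2 := by
      simp [finrank_top]
    have h3 : Module.finrank ℝ (Fin (n + 1) → ℝ) = n + 1 := by
      simp [Module.finrank_pi]
    rw [h2, h3] at hrn
    rw [hker]
    omega
  -- evenness via determinant
  haveI : FiniteDimensional ℝ W := FiniteDimensional.finiteDimensional_submodule W
  let T : W →ₗ[ℝ] W := (Matrix.mulVecLin A).restrict (p := W) (q := W)
    (fun w hw => hmap w hw)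
  have hT2 : T ∘ₗ T = -LinearMap.id := by
    refine LinearMap.ext fun w => Subtype.ext ?_
    have hmain : A *ᵥ (A *ᵥ (w : Fin (n + 1) → ℝ)) = -(w : Fin (n + 1) → ℝ) := hA2W w w.2
    simp only [LinearMap.comp_apply, LinearMap.neg_apply, LinearMap.id_apply,
      LinearMap.restrict_apply, Matrix.mulVecLin_apply, T, NegMemClass.coe_neg]
    exact hmain
  have hdet : LinearMap.det T * LinearMap.det T = (-1 : ℝ) ^ Module.finrank ℝ W := by
    rw [← LinearMap.det_comp, hT2]
    have : (-LinearMap.id : W →ₗ[ℝ] W) = (-1 : ℝ) • LinearMap.id := by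
      ext w; simp
    rw [this, LinearMap.det_smul, LinearMap.det_id, mul_one]
  have heven : Even (Module.finrank ℝ W) := by
    rcases Nat.even_or_odd (Module.finrank ℝ W) with h | h
    · exact h
    · exfalso
      have : ((-1 : ℝ)) ^ Module.finrank ℝ W = -1 := Odd.neg_one_pow h
      rw [this] at hdet
      nlinarith [sq_nonneg (LinearMap.det T)]
  have hevenn : Even (n - 1) := by rwa [hrank] at heven
  have hoddn : Odd n := by
    obtain ⟨k, hk⟩ := hevenn
    exact ⟨k, by omega⟩
  exact ⟨hpos, hmap, hA2W, horth, hrank, hevenn, hoddn⟩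
end

section
/- Under the stated hypotheses, the endomorphism 𝕁_CR of ℝ ⊕ V ⊕ ℝ satisfies 𝕁_CR ∘ 𝕁_CR = −id; i.e. 𝕁_CR is a complex structure on the tractor model space ℝ ⊕ V ⊕ ℝ. -/
/-!
In `𝕁 (𝕁 (a, ξ, c))` the outer entries are `α` and `-g R` of `a • R + J ξ - c • α♯`; as `R` and `α♯`
are null with `α R = g R α♯ = -1`, and `J` is horizontal, they reduce to `-a` and `-c`. In the middle
entry the correction terms `α ξ • R + g R ξ • α♯` cancel exactly against those in `J² ξ`, leaving `-ξ`.
-/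

section TractorMap

variable {K V : Type*} [CommRing K] [AddCommGroup V] [Module K V]
  (g : LinearMap.BilinForm K V) (R αs : V) (α : V →ₗ[K] K) (J : V →ₗ[K] V)

def tractorMap (t : K × V × K) : K × V × K :=
  (α t.2.1, t.1 • R + J t.2.1 - t.2.2 • αs, -g R t.2.1)

variable {g R αs α J}

theorem tractorMap_tractorMap (hR : g R R = 0) (hαR : α R = -1) (hααs : α αs = 0)
    (hgRαs : g R αs = -1) (hJR : J R = 0) (hJαs : J αs = 0) (hαJ : ∀ x, α (J x) = 0)
    (hgRJ : ∀ x, g R (J x) = 0) (hJJ : ∀ x, J (J x) = -(x + α x • R + g R x • αs))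
    (t : K × V × K) :
    tractorMap g R αs α J (tractorMap g R αs α J t) = -t := by
  obtain ⟨a, ξ, c⟩ := t
  simp only [tractorMap, Prod.neg_mk, Prod.mk.injEq]
  refine ⟨?_, ?_, ?_⟩
  · simp only [map_add, map_sub, map_smul, hαR, hαJ, hααs, smul_eq_mul]
    ring
  · simp only [map_add, map_sub, map_smul, hJR, hJαs, hJJ]
    module
  · simp only [map_add, map_sub, map_smul, hR, hgRJ, hgRαs, smul_eq_mul]
    ring

end TractorMap

theorem stmt5_general
    (V : Type) [AddCommGroup V] [Module ℝ V]
    (g : LinearMap.BilinForm ℝ V)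
    (hgsym : ∀ x y, g x y = g y x)
    (R : V) (hR : g R R = 0)
    (α : V →ₗ[ℝ] ℝ) (hαR : α R = -1)
    (αs : V) (hαs : ∀ x, g αs x = α x) (hαs0 : g αs αs = 0)
    (J : V →ₗ[ℝ] V)
    (hJR : J R = 0) (hJαs : J αs = 0)
    (hαJ : ∀ x, α (J x) = 0) (hgRJ : ∀ x, g R (J x) = 0)
    (hJJ : ∀ x, J (J x) = -(x + α x • R + g R x • αs))
    (JCR : ℝ × V × ℝ → ℝ × V × ℝ)
    (hJCR : ∀ (a : ℝ) (ξ : V) (c : ℝ),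
      JCR (a, ξ, c) = (α ξ, a • R + J ξ - c • αs, -(g R ξ))) :
    ∀ t : ℝ × V × ℝ, JCR (JCR t) = -t := by
  have hJCR_eq : JCR = tractorMap g R αs α J := funext fun ⟨a, ξ, c⟩ => hJCR a ξ c
  have hααs : α αs = 0 := by rw [← hαs, hαs0]
  have hgRαs : g R αs = -1 := by rw [hgsym, hαs, hαR]
  subst hJCR_eq
  exact tractorMap_tractorMap hR hαR hααs hgRαs hJR hJαs hαJ hgRJ hJJ

/-- The endomorphism 𝕁_CR of ℝ ⊕ V ⊕ ℝ satisfies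
𝕁_CR ∘ 𝕁_CR = −id, i.e. 𝕁_CR is a complex structure on the tractor model space. -/
theorem stmt5 (n : ℕ) (hn : 1 ≤ n)
    (V : Type) [AddCommGroup V] [Module ℝ V]
    (g : LinearMap.BilinForm ℝ V)
    (hgsym : ∀ x y, g x y = g y x)
    (b : Module.Basis (Fin (n + 1)) ℝ V)
    (hb : ∀ i j, g (b i) (b j) =
      if i = j then (if i = (0 : Fin (n + 1)) then -1 else 1) else 0)
    (R : V) (hR : g R R = 0)
    (α : V →ₗ[ℝ] ℝ) (hαR : α R = -1)
    (αs : V) (hαs : ∀ x, g αs x = α x) (hαs0 : g αs αs = 0)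
    (J : V →ₗ[ℝ] V)
    (hJR : J R = 0) (hJαs : J αs = 0)
    (hαJ : ∀ x, α (J x) = 0) (hgRJ : ∀ x, g R (J x) = 0)
    (hJJ : ∀ x, J (J x) = -(x + α x • R + g R x • αs))
    (JCR : ℝ × V × ℝ → ℝ × V × ℝ)
    (hJCR : ∀ (a : ℝ) (ξ : V) (c : ℝ),
      JCR (a, ξ, c) = (α ξ, a • R + J ξ - c • αs, -(g R ξ))) :
    ∀ t : ℝ × V × ℝ, JCR (JCR t) = -t :=
  stmt5_general V g hgsym R hR α hαR αs hαs hαs0 J hJR hJαs hαJ hgRJ hJJ JCR hJCR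
end

section
/- All traces of the tensor B_θ vanish: for every orthonormal basis (e_i) of V and every X ∈ V one has Σ_i B(e_i, e_i) = 0 (as a vector in V), Σ_i B_θ(e_i, X, e_i) = 0, and Σ_i B_θ(X, e_i, e_i) = 0. -/
/-!
By antisymmetry of `N`, the trace `∑ᵢ B_θ(X, eᵢ, eᵢ)` vanishes termwise, while the other two
traces are `± 1/4` times `∑ᵢ ⟪N X eᵢ, eᵢ⟫ = tr (N X)`. The endomorphism `N X` anticommutes with
`J`, and an endomorphism anticommuting with a complex structure has trace zero:
`tr T = tr (J (T J)) = tr ((T J) J) = -tr T`.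
-/

open RealInnerProductSpace

theorem LinearMap.trace_eq_zero_of_mul_anticomm {R M : Type*} [CommRing R] [IsAddTorsionFree R]
    [AddCommGroup M] [Module R M] {J T : Module.End R M}
    (hJJ : J * J = -1) (hTJ : T * J = -(J * T)) :
    trace R M T = 0 := by
  have hconj : J * (T * J) = T := by
    rw [hTJ, mul_neg, ← mul_assoc, hJJ, neg_one_mul, neg_neg]
  have h : trace R M T = -trace R M T := by
    conv_lhs => rw [← hconj, trace_mul_comm, mul_assoc, hJJ, mul_neg_one]
    rw [map_neg]
  exact self_eq_neg.mp h

theorem Orthonormal.sum_inner_apply_self_eq_zero_of_anticomm {V ι : Type*}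
    [NormedAddCommGroup V] [InnerProductSpace ℝ V] [Fintype ι]
    {e : Module.Basis ι ℝ V} (he : Orthonormal ℝ e) {J T : V →ₗ[ℝ] V}
    (hJJ : ∀ x, J (J x) = -x) (hTJ : ∀ x, T (J x) = -J (T x)) :
    ∑ i, ⟪T (e i), e i⟫ = 0 := by
  have htrace : LinearMap.trace ℝ V T = 0 :=
    LinearMap.trace_eq_zero_of_mul_anticomm (LinearMap.ext hJJ) (LinearMap.ext hTJ)
  rw [LinearMap.trace_eq_sum_inner T (e.toOrthonormalBasis he),
    Module.Basis.coe_toOrthonormalBasis] at htrace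
  simpa only [real_inner_comm] using htrace

theorem stmt10_general (V : Type) [NormedAddCommGroup V] [InnerProductSpace ℝ V]
    (J : V →ₗ[ℝ] V)
    (hJJ : ∀ x : V, J (J x) = -x)
    (N : V →ₗ[ℝ] V →ₗ[ℝ] V)
    (hNanti : ∀ X Y : V, N X Y = -N Y X)
    (hNJ2 : ∀ X Y : V, J (N X Y) = -N X (J Y))
    (Bθ : V → V → V → ℝ)
    (hBθ : ∀ X Y Z : V,
      Bθ X Y Z = (1 / 8) * (⟪N X Y, Z⟫ + ⟪N Z Y, X⟫ + ⟪N Z X, Y⟫))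
    (B : V → V → V)
    (hB : ∀ X Y Z : V, ⟪B X Y, Z⟫ = Bθ X Y Z)
    : ∀ e : Module.Basis (Fin (Module.finrank ℝ V)) ℝ V, Orthonormal ℝ e →
      (∑ i, B (e i) (e i) = 0) ∧
      (∀ X : V, ∑ i, Bθ (e i) X (e i) = 0) ∧
      (∀ X : V, ∑ i, Bθ X (e i) (e i) = 0) := by
  intro e he
  have hNself : ∀ X Y, ⟪N X X, Y⟫ = 0 := fun X Y =>
    self_eq_neg.mp (by rw [← inner_neg_left, ← hNanti])
  have htrace : ∀ X, ∑ i, ⟪N X (e i), e i⟫ = 0 := fun X =>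
    he.sum_inner_apply_self_eq_zero_of_anticomm hJJ fun Y => by rw [hNJ2, neg_neg]
  have hdiag : ∀ Y Z, Bθ Y Y Z = 1 / 4 * ⟪N Z Y, Y⟫ := fun Y Z => by
    rw [hBθ, hNself]; ring
  have hmid : ∀ X Y, Bθ Y X Y = -(1 / 4 * ⟪N X Y, Y⟫) := fun X Y => by
    rw [hBθ, hNself, hNanti Y X, inner_neg_left]; ring
  have hlast : ∀ X Y, Bθ X Y Y = 0 := fun X Y => by
    rw [hBθ, hNself, hNanti Y X, inner_neg_left]; ring
  refine ⟨ext_inner_right ℝ fun Z => ?_, fun X => ?_, fun X => ?_⟩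
  · simp only [sum_inner, hB, hdiag, ← Finset.mul_sum, htrace, mul_zero, inner_zero_left]
  · simp only [hmid, Finset.sum_neg_distrib, ← Finset.mul_sum, htrace, mul_zero, neg_zero]
  · simp only [hlast, Finset.sum_const_zero]

/-- All traces of the tensor B_θ vanish: for every orthonormal
basis (e_i) of V and every X ∈ V one has Σ_i B(e_i,e_i) = 0 (as a vector in V),
Σ_i B_θ(e_i, X, e_i) = 0, and Σ_i B_θ(X, e_i, e_i) = 0. -/
theorem stmt10 (V : Type) [NormedAddCommGroup V] [InnerProductSpace ℝ V]
    [FiniteDimensional ℝ V]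
    (J : V →ₗ[ℝ] V)
    (hJiso : ∀ x y : V, ⟪J x, J y⟫ = ⟪x, y⟫)
    (hJJ : ∀ x : V, J (J x) = -x)
    (N : V →ₗ[ℝ] V →ₗ[ℝ] V)
    (hNanti : ∀ X Y : V, N X Y = -N Y X)
    (hNJ1 : ∀ X Y : V, J (N X Y) = -N (J X) Y)
    (hNJ2 : ∀ X Y : V, J (N X Y) = -N X (J Y))
    (Bθ : V → V → V → ℝ)
    (hBθ : ∀ X Y Z : V,
      Bθ X Y Z = (1 / 8) * (⟪N X Y, Z⟫ + ⟪N Z Y, X⟫ + ⟪N Z X, Y⟫))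
    (B : V → V → V)
    (hB : ∀ X Y Z : V, ⟪B X Y, Z⟫ = Bθ X Y Z)
    : ∀ e : Module.Basis (Fin (Module.finrank ℝ V)) ℝ V, Orthonormal ℝ e →
      (∑ i, B (e i) (e i) = 0) ∧
      (∀ X : V, ∑ i, Bθ (e i) X (e i) = 0) ∧
      (∀ X : V, ∑ i, Bθ X (e i) (e i) = 0) :=
  stmt10_general V J hJJ N hNanti hNJ2 Bθ hBθ B hB
end

section
/- The tensor B vanishes identically if and only if N vanishes identically; i.e. B(X,Y) = 0 for all X,Y ∈ V exactly when N(X,Y) = 0 for all X,Y ∈ V. (In other words, B contains the same information as the Nijenhuis-type tensor N.) -/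
open RealInnerProductSpace

/- For `T(X,Y,Z) = ⟪N(X,Y), Z⟫`, antisymmetry of `N` turns the vanishing of `B_θ` at `(X,Y,Z)` into
`T(X,Y,Z) = T(Y,Z,X) + T(X,Z,Y)`; substituting the same relation at `(Y,Z,X)` gives
`T(X,Y,Z) = -T(X,Y,Z)`. Taking `Z = N(X,Y)` shows `N = 0`. -/

theorem eq_zero_of_antisymm_of_cyclic_sum_eq_zero {α : Type*} (T : α → α → α → ℝ)
    (hanti : ∀ x y z, T x y z = -T y x z)
    (hsum : ∀ x y z, T x y z + T z y x + T z x y = 0) (x y z : α) :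
    T x y z = 0 := by
  linarith [hsum x y z, hsum y z x, hanti z y x, hanti z x y]

theorem stmt11_general (V : Type) [NormedAddCommGroup V] [InnerProductSpace ℝ V]
    (N : V →ₗ[ℝ] V →ₗ[ℝ] V)
    (hNanti : ∀ X Y : V, N X Y = -N Y X)
    (Bθ : V → V → V → ℝ)
    (hBθ : ∀ X Y Z : V,
      Bθ X Y Z = (1 / 8) * (⟪N X Y, Z⟫ + ⟪N Z Y, X⟫ + ⟪N Z X, Y⟫))
    (B : V → V → V)
    (hB : ∀ X Y Z : V, ⟪B X Y, Z⟫ = Bθ X Y Z)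
    : (∀ X Y : V, B X Y = 0) ↔ (∀ X Y : V, N X Y = 0) := by
  constructor
  · intro hB0 X Y
    have hsum : ∀ X Y Z : V, ⟪N X Y, Z⟫ + ⟪N Z Y, X⟫ + ⟪N Z X, Y⟫ = 0 := fun X Y Z => by
      have h := hB X Y Z
      rw [hB0, inner_zero_left, hBθ] at h
      linarith
    have hanti : ∀ X Y Z : V, ⟪N X Y, Z⟫ = -⟪N Y X, Z⟫ := fun X Y Z => by
      rw [hNanti, inner_neg_left]
    exact inner_self_eq_zero.mp
      (eq_zero_of_antisymm_of_cyclic_sum_eq_zero _ hanti hsum X Y (N X Y))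
  · intro hN0 X Y
    exact ext_inner_right ℝ fun Z => by simp [hB, hBθ, hN0]

/-- The tensor B vanishes identically if and only if N vanishes
identically; B contains the same information as the Nijenhuis-type tensor N. -/
theorem stmt11 (V : Type) [NormedAddCommGroup V] [InnerProductSpace ℝ V]
    [FiniteDimensional ℝ V]
    (J : V →ₗ[ℝ] V)
    (hJiso : ∀ x y : V, ⟪J x, J y⟫ = ⟪x, y⟫)
    (hJJ : ∀ x : V, J (J x) = -x)
    (N : V →ₗ[ℝ] V →ₗ[ℝ] V)
    (hNanti : ∀ X Y : V, N X Y = -N Y X)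
    (hNJ1 : ∀ X Y : V, J (N X Y) = -N (J X) Y)
    (hNJ2 : ∀ X Y : V, J (N X Y) = -N X (J Y))
    (Bθ : V → V → V → ℝ)
    (hBθ : ∀ X Y Z : V,
      Bθ X Y Z = (1 / 8) * (⟪N X Y, Z⟫ + ⟪N Z Y, X⟫ + ⟪N Z X, Y⟫))
    (B : V → V → V)
    (hB : ∀ X Y Z : V, ⟪B X Y, Z⟫ = Bθ X Y Z)
    : (∀ X Y : V, B X Y = 0) ↔ (∀ X Y : V, N X Y = 0) :=
  stmt11_general V N hNanti Bθ hBθ B hB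
end

section
/- For every symmetric bilinear form P on V and every τ ∈ V, Σ_{i=1}^{n+1} {e_i^*, {P(e_i, ·), τ}} = −2·P(τ, ·) + (tr_g P)·g(τ, ·), where P(v, ·) ∈ V* denotes the 1-form obtained by inserting v into P, and tr_g P := Σ_i ε_i P(e_i, e_i). -/
/-! Expanding in the orthonormal basis, the `i`-th coordinate of `{τ, P(e_i, ·)}(x)` is
`P(e_i, x) τ^i − g(τ, x) ε_i P(e_i, e_i) + P(e_i, τ) x^i`, because `ε_i² = 1` gives
`e_i^*(η^♯) = ε_i η(e_i)`. Summing over `i`, the first and last terms contract to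
`P(τ, x)` and `P(x, τ)`, which agree by symmetry of `P`, while the middle one produces the
trace `tr_g P`. -/

namespace Module.Basis

variable {ι R M : Type*} [Fintype ι] [CommRing R] [AddCommGroup M] [Module R M]
  (b : Basis ι R M)

theorem sum_apply_mul_coord (f : M →ₗ[R] R) (x : M) :
    ∑ i, f (b i) * b.coord i x = f x := by
  conv_rhs => rw [← b.sum_dual_apply_smul_coord f]
  simp only [LinearMap.sum_apply, LinearMap.smul_apply, smul_eq_mul]

variable [DecidableEq ι] {b} {g : LinearMap.BilinForm R M} {ε : ι → R}

theorem apply_basis_eq_coord_mul_of_orthogonal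
    (hb : ∀ i j, g (b i) (b j) = if i = j then ε i else 0) (v : M) (i : ι) :
    g v (b i) = b.coord i v * ε i := by
  change g.flip (b i) v = _
  rw [← b.sum_apply_mul_coord (g.flip (b i)) v, Finset.sum_eq_single i]
  · simp [hb, mul_comm]
  · intro j _ hji
    simp [hb, hji]
  · simp

theorem coord_eq_mul_of_orthonormal
    (hb : ∀ i j, g (b i) (b j) = if i = j then ε i else 0) (hε : ∀ i, ε i * ε i = 1)
    {v : M} {η : M →ₗ[R] R} (hv : ∀ x, g v x = η x) (i : ι) :
    b.coord i v = ε i * η (b i) := by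
  rw [← hv, apply_basis_eq_coord_mul_of_orthogonal hb, mul_left_comm, hε, mul_one]

end Module.Basis

theorem stmt18_general (n : ℕ)
    (V : Type) [AddCommGroup V] [Module ℝ V]
    (g : LinearMap.BilinForm ℝ V)
    (b : Module.Basis (Fin (n + 1)) ℝ V) (ε : Fin (n + 1) → ℝ)
    (hb : ∀ i j, g (b i) (b j) = if i = j then ε i else 0)
    (hε : ∀ i, ε i = -1 ∨ ε i = 1)
    (sharp : (V →ₗ[ℝ] ℝ) → V)
    (hsharp : ∀ (η : V →ₗ[ℝ] ℝ) (x : V), g (sharp η) x = η x)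
    (brVeta : V → (V →ₗ[ℝ] ℝ) → (V →ₗ[ℝ] V))
    (hbrVeta : ∀ (v : V) (η : V →ₗ[ℝ] ℝ) (x : V),
      brVeta v η x = η x • v - g v x • sharp η + η v • x)
    (P : LinearMap.BilinForm ℝ V)
    (hPsym : ∀ x y : V, P x y = P y x)
    (τ : V) :
    ∑ i, (b.coord i).comp (-(brVeta τ (P (b i))))
      = (-2 : ℝ) • P τ + (∑ i, ε i * P (b i) (b i)) • g τ := by
  have hε_sq : ∀ i, ε i * ε i = 1 := fun i => by rcases hε i with h | h <;> rw [h] <;> norm_num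
  have hcoord_sharp : ∀ i η, b.coord i (sharp η) = ε i * η (b i) := fun i η =>
    b.coord_eq_mul_of_orthonormal hb hε_sq (hsharp η) i
  have hcontract : ∀ y z, ∑ i, P (b i) y * b.coord i z = P z y := fun y z =>
    b.sum_apply_mul_coord (P.flip y) z
  ext x
  have hcoord : ∀ i, b.coord i (-(brVeta τ (P (b i)) x)) =
      ε i * P (b i) (b i) * g τ x - P (b i) x * b.coord i τ - P (b i) τ * b.coord i x := by
    intro i
    simp only [hbrVeta, map_neg, map_add, map_sub, map_smul, hcoord_sharp, smul_eq_mul]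
    ring
  simp only [LinearMap.coe_sum, Finset.sum_apply, LinearMap.comp_apply, LinearMap.neg_apply,
    hcoord, Finset.sum_sub_distrib, ← Finset.sum_mul, hcontract, LinearMap.add_apply,
    LinearMap.smul_apply, smul_eq_mul, hPsym x τ]
  ring

/-- For every symmetric bilinear form P on V and every τ ∈ V,
Σ_i {e_i^*, {P(e_i,·), τ}} = −2·P(τ,·) + (tr_g P)·g(τ,·), where
{P(e_i,·), τ} = −{τ, P(e_i,·)} ∈ End(V) and tr_g P = Σ_i ε_i P(e_i,e_i). -/
theorem stmt18 (n : ℕ) (hn : 1 ≤ n)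
    (V : Type) [AddCommGroup V] [Module ℝ V]
    (g : LinearMap.BilinForm ℝ V)
    (hgsym : ∀ x y : V, g x y = g y x)
    (b : Module.Basis (Fin (n + 1)) ℝ V) (ε : Fin (n + 1) → ℝ)
    (hb : ∀ i j, g (b i) (b j) = if i = j then ε i else 0)
    (hε : ∀ i, ε i = -1 ∨ ε i = 1)
    (hsig : (Finset.univ.filter fun i => ε i = -1).card = 1)
    (sharp : (V →ₗ[ℝ] ℝ) → V)
    (hsharp : ∀ (η : V →ₗ[ℝ] ℝ) (x : V), g (sharp η) x = η x)
    (brVeta : V → (V →ₗ[ℝ] ℝ) → (V →ₗ[ℝ] V))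
    (hbrVeta : ∀ (v : V) (η : V →ₗ[ℝ] ℝ) (x : V),
      brVeta v η x = η x • v - g v x • sharp η + η v • x)
    (P : LinearMap.BilinForm ℝ V)
    (hPsym : ∀ x y : V, P x y = P y x)
    (τ : V) :
    ∑ i, (b.coord i).comp (-(brVeta τ (P (b i))))
      = (-2 : ℝ) • P τ + (∑ i, ε i * P (b i) (b i)) • g τ :=
  stmt18_general n V g b ε hb hε sharp hsharp brVeta hbrVeta P hPsym τ
end
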